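/- arXiv:1208.4964 — 5 statements merged into one kernel-verified Lean document; each statement's English description precedes it below -/
import Mathlib

section
/- Conversely, if ρ is a bipartite density operator on H_A ⊗ H_B and there exists a complete family {π_j} of mutually orthogonal rank-one projectors on H_A (summing to the identity) such that Σ_j (π_j ⊗ I) ρ (π_j ⊗ I) = ρ, then ρ has the form ρ = Σ_j p_j · π_j ⊗ ρ_j for some probability distribution {p_j} and density operators {ρ_j} on H_B. -/
open Matrix
open scoped Kronecker ComplexOrder

noncomputable section

abbrev Mat (n : Type) := Matrix n n ℂ

/-- A density operator: positive semidefinite with unit trace. -/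
def IsDensity {n : Type} [Fintype n] (ρ : Mat n) : Prop :=
  ρ.PosSemidef ∧ ρ.trace = 1

/-- A rank-one projector: Hermitian idempotent of trace one. -/
def IsRankOneProj {n : Type} [Fintype n] (π : Mat n) : Prop :=
  π.IsHermitian ∧ π * π = π ∧ π.trace = 1

/-- A mutually orthogonal family of operators. -/
def OrthFamily {n J : Type} [Fintype n] (π : J → Mat n) : Prop :=
  ∀ i j : J, i ≠ j → π i * π j = 0

/-- A probability distribution on a finite index set. -/
def IsProbDist {J : Type} [Fintype J] (p : J → ℝ) : Prop :=
  (∀ j, 0 ≤ p j) ∧ ∑ j, p j = 1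

/-- Outer product |v⟩⟨v|. -/
def outer {n : Type} (v : n → ℂ) : Mat n :=
  fun i j => v i * star (v j)

/-- Partial trace over the first (Alice) factor. -/
def traceA {a b : Type} [Fintype a] (ρ : Mat (a × b)) : Mat b :=
  fun i j => ∑ k, ρ (k, i) (k, j)

/-- Partial trace over the second (Bob) factor. -/
def traceB {a b : Type} [Fintype b] (ρ : Mat (a × b)) : Mat a :=
  fun i j => ∑ k, ρ (i, k) (j, k)

/-- Separable (unentangled): a convex combination of product density operators. -/
def Separable {a b : Type} [Fintype a] [Fintype b] (ρ : Mat (a × b)) : Prop :=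
  ∃ (m : ℕ) (p : Fin m → ℝ) (σ : Fin m → Mat a) (τ : Fin m → Mat b),
    IsProbDist p ∧ (∀ k, IsDensity (σ k)) ∧ (∀ k, IsDensity (τ k)) ∧
    ρ = ∑ k, (p k : ℂ) • (σ k ⊗ₖ τ k)

/-- Alice-concordant (zero Alice-discord): ρ = Σ_j p_j π_j ⊗ ρ_j with
{π_j} mutually orthogonal rank-one projectors on Alice's factor. -/
def AliceConcordant {a b : Type} [Fintype a] [Fintype b] (ρ : Mat (a × b)) : Prop :=
  ∃ (m : ℕ) (p : Fin m → ℝ) (π : Fin m → Mat a) (σ : Fin m → Mat b),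
    IsProbDist p ∧ (∀ j, IsRankOneProj (π j)) ∧ OrthFamily π ∧
    (∀ j, IsDensity (σ j)) ∧ ρ = ∑ j, (p j : ℂ) • (π j ⊗ₖ σ j)

/-- Bob-concordant: the symmetric notion. -/
def BobConcordant {a b : Type} [Fintype a] [Fintype b] (ρ : Mat (a × b)) : Prop :=
  ∃ (m : ℕ) (p : Fin m → ℝ) (σ : Fin m → Mat a) (π : Fin m → Mat b),
    IsProbDist p ∧ (∀ j, IsRankOneProj (π j)) ∧ OrthFamily π ∧
    (∀ j, IsDensity (σ j)) ∧ ρ = ∑ j, (p j : ℂ) • (σ j ⊗ₖ π j)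

/-- Von Neumann entropy, via the eigenvalues of a Hermitian matrix. -/
def vN {n : Type} [Fintype n] [DecidableEq n] (ρ : Mat n) : ℝ :=
  if h : ρ.IsHermitian then -∑ i, h.eigenvalues i * Real.log (h.eigenvalues i) else 0


/-!
A rank-one projector is an outer product `|v⟩⟨v|`: its eigenvalues are idempotent and sum to one,
so exactly one of them is `1`. Writing `T = |v⟩ ⊗ I`, one has `|v⟩⟨v| ⊗ I = T Tᴴ`, hence
`(π ⊗ I) ρ (π ⊗ I) = T (Tᴴ ρ T) Tᴴ = π ⊗ M` with `M = Tᴴ ρ T` positive semidefinite. Invariance of `ρ`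
thus gives `ρ = ∑ j, π j ⊗ M j`; normalising each `M j = p j • σ j` and taking traces shows that
the weights `p j` sum to one.
-/

lemma exists_eq_single_of_sum_eq_one {n : Type} [Fintype n] [DecidableEq n] {f : n → ℝ}
    (h01 : ∀ i, f i = 0 ∨ f i = 1) (hsum : ∑ i, f i = 1) : ∃ i, f = Pi.single i 1 := by
  obtain ⟨i, -, hi⟩ := Finset.exists_ne_zero_of_sum_ne_zero (hsum ▸ one_ne_zero)
  have hfi : f i = 1 := (h01 i).resolve_left hi
  have hrest : ∑ j ∈ Finset.univ.erase i, f j = 0 := by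
    linarith [Finset.add_sum_erase Finset.univ f (Finset.mem_univ i)]
  have hnonneg : ∀ j, 0 ≤ f j := fun j => by rcases h01 j with h | h <;> simp [h]
  refine ⟨i, funext fun j => ?_⟩
  rcases eq_or_ne j i with rfl | hj
  · simp [hfi]
  · rw [Pi.single_eq_of_ne hj]
    exact (Finset.sum_eq_zero_iff_of_nonneg fun k _ => hnonneg k).mp hrest j
      (Finset.mem_erase.mpr ⟨hj, Finset.mem_univ j⟩)

lemma outer_eq_vecMulVec {n : Type} (v : n → ℂ) : outer v = vecMulVec v (star v) := rfl

lemma mul_outer_mul_conjTranspose {m n : Type} [Fintype n] (A : Matrix m n ℂ) (v : n → ℂ) :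
    A * outer v * Aᴴ = outer (A *ᵥ v) := by
  simp only [outer_eq_vecMulVec, mul_vecMulVec, vecMulVec_mul, star_mulVec]

section

variable {n : Type} [Fintype n]

lemma IsRankOneProj.exists_eq_outer {π : Mat n} (h : IsRankOneProj π) : ∃ v, π = outer v := by
  classical
  obtain ⟨hH, hidem, htr⟩ := h
  have h01 : ∀ i, hH.eigenvalues i = 0 ∨ hH.eigenvalues i = 1 := by
    have hdiag := congrArg (Unitary.conjStarAlgAut ℂ _ (star hH.eigenvectorUnitary)) hidem
    rw [map_mul, hH.conjStarAlgAut_star_eigenvectorUnitary, diagonal_mul_diagonal] at hdiag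
    intro i
    have hi := congrFun (diagonal_injective hdiag) i
    simp only [Function.comp_apply] at hi
    exact IsIdempotentElem.iff_eq_zero_or_one.mp (by exact_mod_cast hi)
  have hsum : ∑ i, hH.eigenvalues i = 1 := by
    have h := hH.trace_eq_sum_eigenvalues.symm.trans htr
    rw [← RCLike.ofReal_sum, ← RCLike.ofReal_one] at h
    exact RCLike.ofReal_injective h
  obtain ⟨i, hsingle⟩ := exists_eq_single_of_sum_eq_one h01 hsum
  refine ⟨(hH.eigenvectorUnitary : Mat n) *ᵥ Pi.single i 1, ?_⟩
  conv_lhs => rw [hH.spectral_theorem, Unitary.conjStarAlgAut_apply, hsingle]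
  rw [← mul_outer_mul_conjTranspose]
  congr 2
  ext j k
  simp only [outer, diagonal_apply, Function.comp_apply, Pi.single_apply]
  split_ifs <;> simp_all

lemma IsDensity.nonempty {ρ : Mat n} (hρ : IsDensity ρ) : Nonempty n := by
  by_contra h
  have : IsEmpty n := not_nonempty_iff.mp h
  simpa [trace] using hρ.2

lemma isDensity_outer_single [DecidableEq n] (i : n) : IsDensity (outer (Pi.single i 1)) :=
  ⟨posSemidef_vecMulVec_self_star _, by simp [trace, outer, Pi.single_apply]⟩

lemma Matrix.PosSemidef.exists_nonneg_smul_isDensity [Nonempty n] {M : Mat n} (hM : M.PosSemidef) :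
    ∃ p : ℝ, 0 ≤ p ∧ ∃ σ, IsDensity σ ∧ M = (p : ℂ) • σ := by
  classical
  obtain ⟨p, hp, htr⟩ : ∃ p : ℝ, 0 ≤ p ∧ (p : ℂ) = M.trace :=
    RCLike.nonneg_iff_exists_ofReal.mp hM.trace_nonneg
  rcases hp.eq_or_lt with rfl | hp
  · refine ⟨0, le_rfl, _, isDensity_outer_single (Classical.arbitrary n), ?_⟩
    simpa [hM.trace_eq_zero_iff] using htr.symm
  · have hp' : (p : ℂ) ≠ 0 := by exact_mod_cast hp.ne'
    refine ⟨p, hp.le, (p : ℂ)⁻¹ • M, ⟨hM.smul ?_, ?_⟩, ?_⟩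
    · exact_mod_cast (inv_pos.mpr hp).le
    · rw [trace_smul, ← htr, smul_eq_mul, inv_mul_cancel₀ hp']
    · rw [smul_smul, mul_inv_cancel₀ hp', one_smul]

end

section Bipartite

variable {a : Type} (b : Type) [Fintype b] [DecidableEq b]

def vecKroneckerOne (v : a → ℂ) : Matrix (a × b) b ℂ :=
  of fun p l => v p.1 * (1 : Mat b) p.2 l

variable {b}

lemma outer_kronecker_eq (v : a → ℂ) (M : Mat b) :
    outer v ⊗ₖ M = vecKroneckerOne b v * M * (vecKroneckerOne b v)ᴴ := by
  ext ⟨x, k⟩ ⟨y, l⟩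
  simp [vecKroneckerOne, outer, mul_apply, one_apply, apply_ite (starRingEnd ℂ)]
  ring

variable [Fintype a]

lemma outer_kronecker_one_mul_mul (v : a → ℂ) (ρ : Mat (a × b)) :
    (outer v ⊗ₖ (1 : Mat b)) * ρ * (outer v ⊗ₖ (1 : Mat b)) =
      outer v ⊗ₖ ((vecKroneckerOne b v)ᴴ * ρ * vecKroneckerOne b v) := by
  simp only [outer_kronecker_eq, Matrix.mul_one, Matrix.mul_assoc]

lemma IsRankOneProj.exists_posSemidef_kronecker_eq {π : Mat a} (hπ : IsRankOneProj π)
    {ρ : Mat (a × b)} (hρ : ρ.PosSemidef) :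
    ∃ M : Mat b, M.PosSemidef ∧ (π ⊗ₖ (1 : Mat b)) * ρ * (π ⊗ₖ (1 : Mat b)) = π ⊗ₖ M := by
  obtain ⟨v, rfl⟩ := hπ.exists_eq_outer
  exact ⟨_, hρ.conjTranspose_mul_mul_same _, outer_kronecker_one_mul_mul v ρ⟩

end Bipartite

theorem stmt_2_general {a b J : Type} [Fintype a] [Fintype b] [Fintype J] [DecidableEq b]
    (ρ : Mat (a × b)) (π : J → Mat a)
    (hρ : IsDensity ρ) (hπ : ∀ j, IsRankOneProj (π j))
    (hinv : ∑ j, (π j ⊗ₖ (1 : Mat b)) * ρ * (π j ⊗ₖ (1 : Mat b)) = ρ) :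
    ∃ (p : J → ℝ) (σ : J → Mat b), IsProbDist p ∧ (∀ j, IsDensity (σ j)) ∧
      ρ = ∑ j, (p j : ℂ) • (π j ⊗ₖ σ j) := by
  have : Nonempty b := hρ.nonempty.map Prod.snd
  choose M hMpsd hM using fun j => (hπ j).exists_posSemidef_kronecker_eq hρ.1
  choose p hp σ hσ hMσ using fun j => (hMpsd j).exists_nonneg_smul_isDensity
  have hdecomp : ρ = ∑ j, (p j : ℂ) • (π j ⊗ₖ σ j) := by
    rw [← hinv]
    refine Finset.sum_congr rfl fun j _ => ?_
    rw [hM j, hMσ j, kronecker_smul]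
  refine ⟨p, σ, ⟨hp, ?_⟩, hσ, hdecomp⟩
  have htrace := congrArg trace hdecomp
  simp only [hρ.2, trace_sum, trace_smul, trace_kronecker, (hπ _).2.2, (hσ _).2, mul_one,
    smul_eq_mul] at htrace
  exact_mod_cast htrace.symm

/-- if a complete family of orthogonal rank-one projectors on H_A leaves ρ
invariant under the unrecorded measurement, then ρ is of the Alice-concordant form. -/
theorem stmt_2 {a b J : Type} [Fintype a] [Fintype b] [Fintype J] [DecidableEq a] [DecidableEq b]
    (ρ : Mat (a × b)) (π : J → Mat a)
    (hρ : IsDensity ρ) (hπ : ∀ j, IsRankOneProj (π j)) (horth : OrthFamily π)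
    (hcomp : ∑ j, π j = 1)
    (hinv : ∑ j, (π j ⊗ₖ (1 : Mat b)) * ρ * (π j ⊗ₖ (1 : Mat b)) = ρ) :
    ∃ (p : J → ℝ) (σ : J → Mat b), IsProbDist p ∧ (∀ j, IsDensity (σ j)) ∧
      ρ = ∑ j, (p j : ℂ) • (π j ⊗ₖ σ j) :=
  stmt_2_general ρ π hρ hπ hinv
end
end

section
/- Every separable bipartite state is unentangled but there exists a separable state that is not Alice-concordant; concretely, the two-qubit state ρ = ½(|0⟩⟨0| ⊗ |0⟩⟨0| + |+⟩⟨+| ⊗ |1⟩⟨1|), with |+⟩ = (|0⟩+|1⟩)/√2, is separable but cannot be written in the form Σ_j p_j π_j ⊗ ρ_j with {π_j} mutually orthogonal rank-one projectors. -/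
open Matrix
open scoped Kronecker ComplexOrder

noncomputable section

section Aux

variable {a b : Type} [Fintype a] [Fintype b]

lemma outer_eq_col_mul (v : a → ℂ) :
    outer v = Matrix.replicateCol Unit v * (Matrix.replicateCol Unit v)ᴴ := by
  ext i j
  simp [outer, Matrix.mul_apply, Matrix.replicateCol, Matrix.conjTranspose_apply]

lemma isDensity_outer (v : a → ℂ) (h : ∑ i, v i * star (v i) = 1) :
    IsDensity (outer v) := by
  refine ⟨?_, ?_⟩
  · rw [outer_eq_col_mul]
    exact Matrix.posSemidef_self_mul_conjTranspose _
  · simpa [Matrix.trace, Matrix.diag, outer] using h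

lemma traceB_sum_smul_kron {m : ℕ} (p : Fin m → ℂ) (π : Fin m → Mat a)
    (σ : Fin m → Mat b) :
    traceB (∑ j, p j • (π j ⊗ₖ σ j)) = ∑ j, (p j * (σ j).trace) • π j := by
  ext i i'
  simp only [traceB, Matrix.sum_apply, Matrix.smul_apply, Matrix.kroneckerMap_apply,
    smul_eq_mul, Matrix.trace, Matrix.diag]
  rw [Finset.sum_comm]
  refine Finset.sum_congr rfl fun j _ => ?_
  rw [Finset.mul_sum, Finset.sum_mul]
  exact Finset.sum_congr rfl fun k _ => by ring

lemma concordant_commute [DecidableEq b] {ρ : Mat (a × b)} (h : AliceConcordant ρ) :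
    ρ * (traceB ρ ⊗ₖ (1 : Mat b)) = (traceB ρ ⊗ₖ (1 : Mat b)) * ρ := by
  obtain ⟨m, p, π, σ, hp, hπ, horth, hσ, rfl⟩ := h
  have htrB : traceB (∑ j, (p j : ℂ) • (π j ⊗ₖ σ j)) = ∑ j, (p j : ℂ) • π j := by
    rw [traceB_sum_smul_kron]
    exact Finset.sum_congr rfl fun j _ => by rw [(hσ j).2, mul_one]
  rw [htrB]
  have hkron : (∑ j, (p j : ℂ) • π j) ⊗ₖ (1 : Mat b)
      = ∑ j, (p j : ℂ) • (π j ⊗ₖ (1 : Mat b)) := by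
    ext x y
    simp [Matrix.kroneckerMap_apply, Matrix.sum_apply, Matrix.smul_apply, Finset.sum_mul,
      mul_assoc]
  rw [hkron]
  have L : (∑ j, (p j : ℂ) • (π j ⊗ₖ σ j)) * (∑ k, (p k : ℂ) • (π k ⊗ₖ (1 : Mat b)))
      = ∑ j, ∑ k, ((p j : ℂ) * p k) • ((π j * π k) ⊗ₖ σ j) := by
    rw [Finset.sum_mul]
    refine Finset.sum_congr rfl fun j _ => ?_
    rw [Finset.mul_sum]
    refine Finset.sum_congr rfl fun k _ => ?_
    rw [smul_mul_assoc, mul_smul_comm, smul_smul, ← Matrix.mul_kronecker_mul, mul_one]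
  have R : (∑ k, (p k : ℂ) • (π k ⊗ₖ (1 : Mat b))) * (∑ j, (p j : ℂ) • (π j ⊗ₖ σ j))
      = ∑ j, ∑ k, ((p j : ℂ) * p k) • ((π k * π j) ⊗ₖ σ j) := by
    rw [Finset.sum_mul, Finset.sum_comm]
    refine Finset.sum_congr rfl fun j _ => ?_
    rw [Finset.mul_sum]
    refine Finset.sum_congr rfl fun k _ => ?_
    rw [smul_mul_assoc, mul_smul_comm, smul_smul, ← Matrix.mul_kronecker_mul, one_mul,
      mul_comm ((p k : ℂ)) ((p j : ℂ))]
  rw [L, R]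
  refine Finset.sum_congr rfl fun j _ => Finset.sum_congr rfl fun k _ => ?_
  by_cases hjk : j = k
  · subst hjk; rfl
  · rw [horth j k hjk, horth k j (Ne.symm hjk)]

end Aux

/-- ρ = ½(|0⟩⟨0|⊗|0⟩⟨0| + |+⟩⟨+|⊗|1⟩⟨1|) is separable (unentangled)
but not Alice-concordant. -/
theorem stmt_5 :
    let ket0 : Fin 2 → ℂ := ![1, 0]
    let ket1 : Fin 2 → ℂ := ![0, 1]
    let ketP : Fin 2 → ℂ := fun _ => ((Real.sqrt 2 : ℝ)⁻¹ : ℂ)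
    let ρ : Mat (Fin 2 × Fin 2) :=
      (1/2 : ℂ) • (outer ket0 ⊗ₖ outer ket0 + outer ketP ⊗ₖ outer ket1)
    Separable ρ ∧ ¬ AliceConcordant ρ := by
  intro ket0 ket1 ketP ρ
  have hc : ((Real.sqrt 2 : ℝ)⁻¹ : ℂ) * ((Real.sqrt 2 : ℝ)⁻¹ : ℂ) = 1/2 := by
    rw [← mul_inv, ← Complex.ofReal_mul, Real.mul_self_sqrt (by norm_num)]
    norm_num
  constructor
  · refine ⟨2, ![1/2, 1/2], ![outer ket0, outer ketP], ![outer ket0, outer ket1],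
      ⟨?_, ?_⟩, ?_, ?_, ?_⟩
    · intro j; fin_cases j <;> norm_num
    · simp [Fin.sum_univ_two]; norm_num
    · intro k; fin_cases k
      · exact isDensity_outer _ (by simp [ket0, Fin.sum_univ_two])
      · refine isDensity_outer _ ?_
        simp only [ketP, Fin.sum_univ_two, Complex.star_def, map_inv₀, Complex.conj_ofReal]
        rw [hc]; norm_num
    · intro k; fin_cases k
      · exact isDensity_outer _ (by simp [ket0, Fin.sum_univ_two])
      · exact isDensity_outer _ (by simp [ket1, Fin.sum_univ_two])
    · show ρ = _
      rw [Fin.sum_univ_two]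
      simp only [Matrix.cons_val_zero, Matrix.cons_val_one, Matrix.head_cons, ρ]
      push_cast
      rw [smul_add]
  · intro h
    have hcomm := concordant_commute h
    have h1 := congrArg (fun M => M ((0 : Fin 2), (0 : Fin 2)) ((1 : Fin 2), (0 : Fin 2))) hcomm
    simp only [Matrix.mul_apply, Fintype.sum_prod_type, Fin.sum_univ_two, traceB,
      Matrix.smul_apply, Matrix.add_apply, Matrix.kroneckerMap_apply, outer,
      Matrix.one_apply, ρ, ket0, ket1, ketP, Matrix.cons_val_zero, Matrix.cons_val_one,
      Matrix.head_cons, smul_eq_mul] at h1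
    rw [← Complex.ofReal_inv] at h1
    simp only [star_trivial, Complex.star_def, Complex.conj_ofReal, hc] at h1
    norm_num at h1
end
end

section
/- Let ρ = Σ_k p_k σ_k ⊗ ρ_k be a separable state, let b̂ be a Hermitian operator on H_B such that each ρ_k is an eigenoperator of b̂ with eigenvalue B(k) (i.e., b̂ ρ_k = B(k) ρ_k). Then there exists a POVM on H_A whose outcome determines the value of b̂ with certainty (i.e., conditioned on each Alice outcome, Bob's b̂-measurement outcome has probability one for a single value) if and only if σ_k σ_{k'} = 0 whenever B(k) ≠ B(k'). -/
open Matrix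
open scoped Kronecker ComplexOrder

noncomputable section

/-!
Bob's conditional state after Alice's outcome `E` is `Σ_j p_j tr(E σ_j) ρ_j`, a combination
of eigenoperators of `b̂` of unit trace with nonnegative weights; applying `(b̂ - β)²` and taking
the trace shows that it is an eigenoperator of `b̂` exactly when `tr(E σ_j) = 0` for all `j`
outside one eigenvalue class. For positive semidefinite matrices `tr(E σ) = 0` forces `E σ = 0`,
so inserting `1 = Σ_i E_i` gives `σ_k σ_k' = Σ_i σ_k E_i σ_k' = 0` across classes. Conversely,
when the classes are mutually orthogonal, so are the support projections of the class sums
`Σ_{B(j) = v} σ_j`; together with the projection onto the complement of their ranges they form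
the required POVM.
-/

open scoped MatrixOrder

theorem IsStarProjection.sum {ι R : Type*} [NonUnitalNonAssocSemiring R] [StarRing R]
    {s : Finset ι} {p : ι → R} (hp : ∀ i ∈ s, IsStarProjection (p i))
    (horth : ∀ i ∈ s, ∀ j ∈ s, i ≠ j → p i * p j = 0) :
    IsStarProjection (∑ i ∈ s, p i) := by
  classical
  induction s using Finset.induction_on with
  | empty => simp [IsStarProjection.zero]
  | insert a s ha ih =>
    have hmem {i} (hi : i ∈ s) : i ∈ insert a s := Finset.mem_insert_of_mem hi
    rw [Finset.sum_insert ha]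
    refine (hp a (s.mem_insert_self a)).add
      (ih (fun i hi ↦ hp i (hmem hi)) fun i hi j hj ↦ horth i (hmem hi) j (hmem hj)) ?_
    rw [Finset.mul_sum]
    exact Finset.sum_eq_zero fun i hi ↦
      horth a (s.mem_insert_self a) i (hmem hi) (ne_of_mem_of_not_mem hi ha).symm

namespace Matrix

variable {n : Type} [Fintype n] [DecidableEq n]

theorem PosSemidef.mul_eq_zero_of_conjTranspose_mul_mul_eq_zero {m : Type} [Fintype m]
    {A : Mat n} (hA : A.PosSemidef) {Y : Matrix n m ℂ} (h : Yᴴ * A * Y = 0) : A * Y = 0 := by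
  obtain ⟨s, rfl⟩ := CStarAlgebra.nonneg_iff_eq_star_mul_self.mp hA.nonneg
  rw [star_eq_conjTranspose] at h ⊢
  have hsY : s * Y = 0 := by
    rw [← conjTranspose_mul_self_eq_zero, conjTranspose_mul]
    simpa only [Matrix.mul_assoc] using h
  rw [Matrix.mul_assoc, hsY, Matrix.mul_zero]

theorem PosSemidef.mul_eq_zero_of_le {A B : Mat n} (hA : A.PosSemidef) (hAB : A ≤ B)
    {Y : Mat n} (hBY : B * Y = 0) : A * Y = 0 := by
  refine hA.mul_eq_zero_of_conjTranspose_mul_mul_eq_zero (le_antisymm ?_ ?_)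
  · simpa [star_eq_conjTranspose, mul_assoc, hBY] using
      star_left_conjugate_le_conjugate hAB Y
  · exact (hA.conjTranspose_mul_mul_same Y).nonneg

theorem PosSemidef.trace_mul_nonneg {A B : Mat n} (hA : A.PosSemidef) (hB : B.PosSemidef) :
    0 ≤ (A * B).trace := by
  obtain ⟨s, rfl⟩ := CStarAlgebra.nonneg_iff_eq_star_mul_self.mp hB.nonneg
  rw [star_eq_conjTranspose, ← mul_assoc, trace_mul_comm, ← mul_assoc]
  exact (hA.mul_mul_conjTranspose_same s).trace_nonneg

theorem PosSemidef.mul_eq_zero_of_trace_mul_eq_zero {A B : Mat n} (hA : A.PosSemidef)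
    (hB : B.PosSemidef) (h : (A * B).trace = 0) : A * B = 0 := by
  obtain ⟨s, rfl⟩ := CStarAlgebra.nonneg_iff_eq_star_mul_self.mp hB.nonneg
  rw [star_eq_conjTranspose, ← mul_assoc, trace_mul_comm, ← mul_assoc] at h
  have hAs : A * sᴴ = 0 := hA.mul_eq_zero_of_conjTranspose_mul_mul_eq_zero <| by
    simpa using (hA.mul_mul_conjTranspose_same s).trace_eq_zero_iff.mp h
  rw [star_eq_conjTranspose, ← mul_assoc, hAs, zero_mul]

theorem IsHermitian.mul_eq_zero_comm {m α : Type*} [Fintype m] [NonUnitalSemiring α]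
    [StarRing α] {A B : Matrix m m α} (hA : A.IsHermitian) (hB : B.IsHermitian) :
    A * B = 0 ↔ B * A = 0 := by
  constructor <;> intro h <;> simpa [hA.eq, hB.eq] using congr_arg (·ᴴ) h

def supportProj (S : Mat n) : Mat n := cfc (fun x : ℝ ↦ if x = 0 then 0 else 1) S

theorem isStarProjection_supportProj (S : Mat n) : IsStarProjection (supportProj S) := by
  refine ⟨?_, cfc_predicate _ S⟩
  rw [IsIdempotentElem, supportProj, ← cfc_mul (hf := S.finite_real_spectrum.continuousOn _)
    (hg := S.finite_real_spectrum.continuousOn _)]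
  congr 1 with x
  split_ifs <;> simp

theorem mul_supportProj {S : Mat n} (hS : S.IsHermitian) : S * supportProj S = S := by
  have h := cfc_mul (fun x : ℝ ↦ x) (fun x ↦ if x = 0 then 0 else 1) S
    (hg := S.finite_real_spectrum.continuousOn _)
  rw [cfc_id' ℝ S hS.isSelfAdjoint] at h
  rw [supportProj, ← h]
  conv_rhs => rw [← cfc_id' ℝ S hS.isSelfAdjoint]
  congr 1 with x
  split_ifs with hx <;> simp [hx]

theorem supportProj_eq_cfc_inv_mul {S : Mat n} (hS : S.IsHermitian) :
    supportProj S = cfc (·⁻¹ : ℝ → ℝ) S * S := by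
  have h := cfc_mul (·⁻¹ : ℝ → ℝ) (fun x ↦ x) S (hf := S.finite_real_spectrum.continuousOn _)
  rw [cfc_id' ℝ S hS.isSelfAdjoint] at h
  rw [supportProj, ← h]
  congr 1 with x
  split_ifs with hx <;> simp [hx]

theorem supportProj_mul_eq_zero {S Y : Mat n} (hS : S.IsHermitian) (h : S * Y = 0) :
    supportProj S * Y = 0 := by
  rw [supportProj_eq_cfc_inv_mul hS, mul_assoc, h, mul_zero]

end Matrix

section PartialTrace

variable {a b : Type} [Fintype a]

theorem traceA_sum {ι : Type} (s : Finset ι) (M : ι → Mat (a × b)) :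
    traceA (∑ i ∈ s, M i) = ∑ i ∈ s, traceA (M i) := by
  ext i j
  simp only [traceA, Matrix.sum_apply]
  exact Finset.sum_comm

theorem traceA_smul (c : ℂ) (M : Mat (a × b)) : traceA (c • M) = c • traceA M := by
  ext i j
  simp [traceA, Finset.mul_sum]

theorem traceA_kronecker (A : Mat a) (B : Mat b) : traceA (A ⊗ₖ B) = A.trace • B := by
  ext i j
  simp [traceA, trace, Finset.sum_mul]

theorem trace_traceA [Fintype b] (M : Mat (a × b)) : (traceA M).trace = M.trace := by
  simp only [trace, traceA, diag, Fintype.sum_prod_type]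
  exact Finset.sum_comm

theorem traceA_kronecker_one_mul_sum [Fintype b] [DecidableEq b] {K : Type} [Fintype K]
    (E : Mat a) (c : K → ℂ) (σ : K → Mat a) (τ : K → Mat b) :
    traceA ((E ⊗ₖ (1 : Mat b)) * ∑ k, c k • (σ k ⊗ₖ τ k)) =
      ∑ k, (c k * (E * σ k).trace) • τ k := by
  simp only [Finset.mul_sum, mul_smul_comm, ← mul_kronecker_mul, one_mul, traceA_sum,
    traceA_smul, traceA_kronecker, smul_smul]

end PartialTrace

section Eigen

variable {n ι : Type} [Fintype n] [DecidableEq n] [Fintype ι] {A : Mat n} {τ : ι → Mat n}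
  {μ : ι → ℝ} {c : ι → ℂ}

theorem eq_of_mul_sum_smul_eq_smul (hτ : ∀ j, (τ j).trace = 1)
    (hAτ : ∀ j, A * τ j = (μ j : ℂ) • τ j) (hc : ∀ j, 0 ≤ c j) {β : ℝ}
    (h : A * ∑ j, c j • τ j = (β : ℂ) • ∑ j, c j • τ j) {j : ι} (hj : c j ≠ 0) : μ j = β := by
  set D := A - (β : ℂ) • 1
  have hDτ (j : ι) : D * τ j = ((μ j - β : ℝ) : ℂ) • τ j := by
    rw [sub_mul, hAτ, smul_one_mul, ← sub_smul, Complex.ofReal_sub]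
  have hD : D * ∑ j, c j • τ j = 0 := by rw [sub_mul, h, smul_one_mul, sub_self]
  have hsum : ∑ j, c j * ((μ j - β) ^ 2 : ℝ) = 0 := by
    have := congr_arg trace (congr_arg (D * ·) hD)
    simp only [mul_zero, trace_zero, Finset.mul_sum, mul_smul_comm, hDτ, smul_smul,
      trace_sum, trace_smul, hτ, smul_eq_mul, mul_one] at this
    rw [← this]
    push_cast
    exact Finset.sum_congr rfl fun j _ ↦ by ring
  have hterm := (Finset.sum_eq_zero_iff_of_nonneg fun i _ ↦
    mul_nonneg (hc i) (by exact_mod_cast sq_nonneg (μ i - β))).mp hsum j (Finset.mem_univ j)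
  have hsq : (μ j - β) ^ 2 = 0 := by exact_mod_cast (mul_eq_zero.mp hterm).resolve_left hj
  exact sub_eq_zero.mp (pow_eq_zero_iff two_ne_zero |>.mp hsq)

theorem exists_smul_of_trace_ne_zero_iff (hτ : ∀ j, (τ j).trace = 1)
    (hAτ : ∀ j, A * τ j = (μ j : ℂ) • τ j) (hc : ∀ j, 0 ≤ c j) :
    ((∑ j, c j • τ j).trace ≠ 0 → ∃ β : ℝ, A * ∑ j, c j • τ j = (β : ℂ) • ∑ j, c j • τ j) ↔
      ∃ v : ℝ, ∀ j, μ j ≠ v → c j = 0 := by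
  have htrace : (∑ j, c j • τ j).trace = ∑ j, c j := by simp [trace_sum, hτ]
  constructor
  · intro h
    by_cases h0 : (∑ j, c j • τ j).trace = 0
    · rw [htrace] at h0
      exact ⟨0, fun j _ ↦ (Finset.sum_eq_zero_iff_of_nonneg fun i _ ↦ hc i).mp h0 j
        (Finset.mem_univ j)⟩
    · obtain ⟨β, hβ⟩ := h h0
      exact ⟨β, fun j hj ↦ by_contra fun hcj ↦ hj (eq_of_mul_sum_smul_eq_smul hτ hAτ hc hβ hcj)⟩
  · rintro ⟨v, hv⟩ -
    refine ⟨v, ?_⟩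
    simp only [Finset.mul_sum, Finset.smul_sum, mul_smul_comm, hAτ, smul_smul]
    refine Finset.sum_congr rfl fun j _ ↦ ?_
    by_cases hj : μ j = v
    · rw [hj, mul_comm]
    · rw [hv j hj, mul_zero, zero_mul]

end Eigen

section Fibers

variable {a K β : Type} [Fintype K] [DecidableEq β] {σ : K → Mat a} {B : K → β}

def fiberSum (σ : K → Mat a) (B : K → β) (v : β) : Mat a :=
  ∑ j ∈ Finset.univ.filter (B · = v), σ j

theorem posSemidef_fiberSum (hσ : ∀ k, (σ k).PosSemidef) (v : β) :
    (fiberSum σ B v).PosSemidef :=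
  posSemidef_sum _ fun j _ ↦ hσ j

theorem le_fiberSum (hσ : ∀ k, (σ k).PosSemidef) (j : K) : σ j ≤ fiberSum σ B (B j) :=
  Finset.single_le_sum (f := σ) (fun i _ ↦ (hσ i).nonneg) (by simp)

theorem fiberSum_mul_eq_zero [Fintype a] (horth : ∀ k k', B k ≠ B k' → σ k * σ k' = 0)
    {v : β} {j : K} (hj : B j ≠ v) : fiberSum σ B v * σ j = 0 := by
  rw [fiberSum, Finset.sum_mul]
  exact Finset.sum_eq_zero fun i hi ↦
    horth i j fun h ↦ hj (h.symm.trans (Finset.mem_filter.mp hi).2)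

end Fibers

section SupportProjections

variable {a K β : Type} [Fintype a] [DecidableEq a] [Fintype K] [DecidableEq β]
  {σ : K → Mat a} {B : K → β}

theorem mul_supportProj_fiberSum_of_ne (hσ : ∀ k, (σ k).PosSemidef)
    (horth : ∀ k k', B k ≠ B k' → σ k * σ k' = 0) {v : β} {j : K} (hj : B j ≠ v) :
    σ j * supportProj (fiberSum σ B v) = 0 :=
  ((isStarProjection_supportProj _).isSelfAdjoint.isHermitian.mul_eq_zero_comm
    (hσ j).isHermitian).mp <|
    supportProj_mul_eq_zero (posSemidef_fiberSum hσ v).isHermitian (fiberSum_mul_eq_zero horth hj)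

theorem mul_supportProj_fiberSum_self (hσ : ∀ k, (σ k).PosSemidef) (j : K) :
    σ j * supportProj (fiberSum σ B (B j)) = σ j := by
  have hS := (posSemidef_fiberSum (B := B) hσ (B j)).isHermitian
  have h := (hσ j).mul_eq_zero_of_le (le_fiberSum hσ j)
    (Y := 1 - supportProj (fiberSum σ B (B j))) <| by
    rw [mul_sub, mul_one, mul_supportProj hS, sub_self]
  rwa [mul_sub, mul_one, sub_eq_zero, eq_comm] at h

theorem supportProj_fiberSum_mul_supportProj_fiberSum (hσ : ∀ k, (σ k).PosSemidef)
    (horth : ∀ k k', B k ≠ B k' → σ k * σ k' = 0) {v w : β} (hvw : v ≠ w) :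
    supportProj (fiberSum σ B v) * supportProj (fiberSum σ B w) = 0 := by
  have hS (u : β) := (posSemidef_fiberSum (B := B) hσ u).isHermitian
  have hSS : fiberSum σ B w * fiberSum σ B v = 0 := by
    nth_rewrite 2 [fiberSum]
    rw [Finset.mul_sum]
    exact Finset.sum_eq_zero fun j hj ↦ fiberSum_mul_eq_zero horth <| by
      rw [(Finset.mem_filter.mp hj).2]; exact hvw
  have hQS := supportProj_mul_eq_zero (hS w) hSS
  exact supportProj_mul_eq_zero (hS v) <|
    ((isStarProjection_supportProj _).isSelfAdjoint.isHermitian.mul_eq_zero_comm (hS v)).mp hQS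

end SupportProjections

theorem exists_povm_of_orthogonal_fibers {a K β : Type} [Fintype a] [DecidableEq a] [Fintype K]
    [DecidableEq β] [Nonempty β] {σ : K → Mat a} {B : K → β} (hσ : ∀ k, (σ k).PosSemidef)
    (horth : ∀ k k', B k ≠ B k' → σ k * σ k' = 0) :
    ∃ (m : ℕ) (E : Fin m → Mat a), (∀ i, (E i).PosSemidef) ∧ ∑ i, E i = 1 ∧
      ∀ i, ∃ v, ∀ j, B j ≠ v → (E i * σ j).trace = 0 := by
  set Q := fun v ↦ supportProj (fiberSum σ B v)
  set V := Finset.univ.image B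
  set P := ∑ v ∈ V, Q v
  have hP : IsStarProjection P := IsStarProjection.sum
    (fun v _ ↦ isStarProjection_supportProj _)
    (fun v _ w _ hvw ↦ supportProj_fiberSum_mul_supportProj_fiberSum hσ horth hvw)
  have hσP (j : K) : σ j * (1 - P) = 0 := by
    rw [mul_sub, mul_one, sub_eq_zero, Finset.mul_sum, Finset.sum_eq_single (B j)
      (fun v _ hv ↦ mul_supportProj_fiberSum_of_ne hσ horth hv.symm) (by simp [V]),
      mul_supportProj_fiberSum_self hσ]
  let E : Option V → Mat a := fun o ↦ o.elim (1 - P) (fun v ↦ Q v)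
  have hE_psd : ∀ o, (E o).PosSemidef
    | none => hP.one_sub_nonneg.posSemidef
    | some _ => (isStarProjection_supportProj _).nonneg.posSemidef
  have hE_sum : ∑ o, E o = 1 := by
    rw [Fintype.sum_option]
    change 1 - P + ∑ v : V, Q v = 1
    rw [Finset.sum_coe_sort V Q, sub_add_cancel]
  have hE_fiber : ∀ o, ∃ v, ∀ j, B j ≠ v → (E o * σ j).trace = 0
    | none => ⟨Classical.arbitrary β, fun j _ ↦ by simp [E, trace_mul_comm _ (σ j), hσP j]⟩
    | some v => ⟨v, fun j hj ↦ by
        simp [E, Q, trace_mul_comm _ (σ j), mul_supportProj_fiberSum_of_ne hσ horth hj]⟩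
  exact ⟨_, E ∘ (Fintype.equivFin _).symm, fun i ↦ hE_psd _,
    (Equiv.sum_comp _ E).trans hE_sum, fun i ↦ hE_fiber _⟩

theorem mul_eq_zero_of_povm_fibers {a K β ι : Type} [Fintype a] [DecidableEq a] [Fintype ι]
    {σ : K → Mat a} {B : K → β} (hσ : ∀ k, (σ k).PosSemidef) {E : ι → Mat a}
    (hE : ∀ i, (E i).PosSemidef) (hsum : ∑ i, E i = 1)
    (hfiber : ∀ i, ∃ v, ∀ j, B j ≠ v → (E i * σ j).trace = 0) {k k' : K} (hkk' : B k ≠ B k') :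
    σ k * σ k' = 0 := by
  calc σ k * σ k' = ∑ i, σ k * E i * σ k' := by
        rw [← Finset.sum_mul, ← Finset.mul_sum, hsum, mul_one]
    _ = 0 := Finset.sum_eq_zero fun i _ ↦ by
      obtain ⟨v, hv⟩ := hfiber i
      by_cases hk : B k = v
      · rw [mul_assoc, (hE i).mul_eq_zero_of_trace_mul_eq_zero (hσ k')
          (hv k' fun h ↦ hkk' (hk.trans h.symm)), mul_zero]
      · rw [(hσ k).mul_eq_zero_of_trace_mul_eq_zero (hE i) (trace_mul_comm (σ k) _ ▸ hv k hk),
          zero_mul]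

theorem stmt_9_general {a b K : Type} [Fintype a] [Fintype b] [Fintype K]
    [DecidableEq a] [DecidableEq b]
    (p : K → ℝ) (σ : K → Mat a) (τ : K → Mat b) (bop : Mat b) (Bv : K → ℝ)
    (ρ : Mat (a × b))
    (hppos : ∀ k, 0 < p k)
    (hσ : ∀ k, IsDensity (σ k)) (hτ : ∀ k, IsDensity (τ k))
    (heig : ∀ k, bop * τ k = (Bv k : ℂ) • τ k)
    (hρ : ρ = ∑ k, (p k : ℂ) • (σ k ⊗ₖ τ k)) :
    (∃ (m : ℕ) (E : Fin m → Mat a), (∀ i, (E i).PosSemidef) ∧ (∑ i, E i = 1) ∧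
        ∀ i, Matrix.trace ((E i ⊗ₖ (1 : Mat b)) * ρ) ≠ 0 →
          ∃ β : ℝ, bop * traceA ((E i ⊗ₖ (1 : Mat b)) * ρ)
              = (β : ℂ) • traceA ((E i ⊗ₖ (1 : Mat b)) * ρ))
    ↔ (∀ k k', Bv k ≠ Bv k' → σ k * σ k' = 0) := by
  have hσ' (k : K) := (hσ k).1
  have determines_iff (E : Mat a) (hE : E.PosSemidef) :
      (((E ⊗ₖ (1 : Mat b)) * ρ).trace ≠ 0 → ∃ β : ℝ, bop * traceA ((E ⊗ₖ (1 : Mat b)) * ρ)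
          = (β : ℂ) • traceA ((E ⊗ₖ (1 : Mat b)) * ρ)) ↔
        ∃ v, ∀ j, Bv j ≠ v → (E * σ j).trace = 0 := by
    rw [← trace_traceA, hρ, traceA_kronecker_one_mul_sum,
      exists_smul_of_trace_ne_zero_iff (fun k ↦ (hτ k).2) heig
        fun k ↦ mul_nonneg (by exact_mod_cast (hppos k).le) (hE.trace_mul_nonneg (hσ' k))]
    simp only [mul_eq_zero, Complex.ofReal_eq_zero, (hppos _).ne', false_or]
  constructor
  · rintro ⟨m, E, hE, hsum, hdet⟩ k k' hkk'
    exact mul_eq_zero_of_povm_fibers hσ' hE hsum (fun i ↦ (determines_iff _ (hE i)).mp (hdet i))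
      hkk'
  · intro horth
    obtain ⟨m, E, hE, hsum, hfiber⟩ := exists_povm_of_orthogonal_fibers hσ' horth
    exact ⟨m, E, hE, hsum, fun i ↦ (determines_iff _ (hE i)).mpr (hfiber i)⟩

/-- for ρ = Σ_k p_k σ_k⊗ρ_k with b̂ρ_k = B(k)ρ_k, Alice has a POVM whose
outcomes determine the value of b̂ with certainty iff σ_k σ_k' = 0 whenever B(k) ≠ B(k'). -/
theorem stmt_9 {a b K : Type} [Fintype a] [Fintype b] [Fintype K]
    [DecidableEq a] [DecidableEq b]
    (p : K → ℝ) (σ : K → Mat a) (τ : K → Mat b) (bop : Mat b) (Bv : K → ℝ)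
    (ρ : Mat (a × b))
    (hp : IsProbDist p) (hppos : ∀ k, 0 < p k)
    (hσ : ∀ k, IsDensity (σ k)) (hτ : ∀ k, IsDensity (τ k))
    (hbop : bop.IsHermitian) (heig : ∀ k, bop * τ k = (Bv k : ℂ) • τ k)
    (hρ : ρ = ∑ k, (p k : ℂ) • (σ k ⊗ₖ τ k)) :
    (∃ (m : ℕ) (E : Fin m → Mat a), (∀ i, (E i).PosSemidef) ∧ (∑ i, E i = 1) ∧
        ∀ i, Matrix.trace ((E i ⊗ₖ (1 : Mat b)) * ρ) ≠ 0 →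
          ∃ β : ℝ, bop * traceA ((E i ⊗ₖ (1 : Mat b)) * ρ)
              = (β : ℂ) • traceA ((E i ⊗ₖ (1 : Mat b)) * ρ))
    ↔ (∀ k k', Bv k ≠ Bv k' → σ k * σ k' = 0) :=
  stmt_9_general p σ τ bop Bv ρ hppos hσ hτ heig hρ
end
end

section
/- If ρ is a bipartite density operator such that for every Hermitian observable a on H_A there exists a measurement (an instrument implementing the projective measurement of a) whose unconditioned action leaves ρ invariant, then ρ is Alice-concordant. Equivalently: if for all complete orthogonal projector families {P_i} on H_A we have Σ_i (P_i ⊗ I)ρ(P_i ⊗ I) = ρ, then ρ = Σ_j p_j π_j ⊗ ρ_j with {π_j} mutually orthogonal rank-one projectors. -/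
open Matrix
open scoped Kronecker ComplexOrder

noncomputable section

/-!
Measuring Alice's factor in a fixed orthonormal basis leaves `ρ` invariant, so `ρ` is block
diagonal: `ρ = ∑ᵢ |i⟩⟨i| ⊗ Bᵢ` with `Bᵢ` the diagonal blocks of `ρ`, which are positive
semidefinite. Writing each `Bᵢ` as `tr Bᵢ` times a density operator gives the concordant
decomposition, with weights `pᵢ = tr Bᵢ`.
-/

lemma isRankOneProj_single {n : Type} [Fintype n] [DecidableEq n] (i : n) :
    IsRankOneProj (single i i (1 : ℂ)) :=
  ⟨by simp [IsHermitian], by simp, by simp⟩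

lemma orthFamily_single {n : Type} [Fintype n] [DecidableEq n] :
    OrthFamily (fun i : n => single i i (1 : ℂ)) :=
  fun i j hij => single_mul_single_of_ne (1 : ℂ) i i j hij 1

lemma single_kronecker_one_mul_mul_single_kronecker_one {a b R : Type} [Fintype a] [Fintype b]
    [DecidableEq a] [DecidableEq b] [Semiring R] (ρ : Matrix (a × b) (a × b) R) (i : a) :
    (single i i 1 ⊗ₖ (1 : Matrix b b R)) * ρ * (single i i 1 ⊗ₖ 1)
      = single i i 1 ⊗ₖ ρ.submatrix (i, ·) (i, ·) := by
  ext ⟨k, x⟩ ⟨l, y⟩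
  simp [Matrix.mul_apply, single, one_apply, Fintype.sum_prod_type, ite_and]
  split_ifs <;> rfl

lemma isDensity_inv_card_smul_one {n : Type} [Fintype n] [DecidableEq n] [Nonempty n] :
    IsDensity (((Fintype.card n : ℝ)⁻¹ : ℂ) • (1 : Mat n)) := by
  refine ⟨PosSemidef.one.smul (by positivity), ?_⟩
  simp

lemma Matrix.PosSemidef.exists_eq_trace_smul_isDensity {n : Type} [Fintype n] [DecidableEq n]
    [Nonempty n] {B : Mat n} (hB : B.PosSemidef) :
    ∃ (p : ℝ) (σ : Mat n), 0 ≤ p ∧ (p : ℂ) = B.trace ∧ IsDensity σ ∧ B = (p : ℂ) • σ := by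
  set p := B.trace.re
  have htr : (p : ℂ) = B.trace := (Complex.eq_re_of_ofReal_le hB.trace_nonneg).symm
  have hp : 0 ≤ p := by exact_mod_cast htr ▸ hB.trace_nonneg
  rcases hp.eq_or_lt with hp0 | hp0
  · refine ⟨p, _, hp, htr, isDensity_inv_card_smul_one, ?_⟩
    rw [← hp0, hB.trace_eq_zero_iff.mp (by rw [← htr, ← hp0]; simp)]
    simp
  · have hp' : (p : ℂ) ≠ 0 := by exact_mod_cast hp0.ne'
    refine ⟨p, (p⁻¹ : ℂ) • B, hp, htr, ⟨hB.smul ?_, ?_⟩, ?_⟩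
    · exact_mod_cast inv_nonneg.mpr hp
    · rw [trace_smul, ← htr, smul_eq_mul, inv_mul_cancel₀ hp']
    · rw [smul_smul, mul_inv_cancel₀ hp', one_smul]

lemma aliceConcordant_of_eq_sum {a b J : Type} [Fintype a] [Fintype b] [Fintype J]
    {ρ : Mat (a × b)} {p : J → ℝ} {π : J → Mat a} {σ : J → Mat b} (hp : IsProbDist p)
    (hπ : ∀ j, IsRankOneProj (π j)) (horth : OrthFamily π) (hσ : ∀ j, IsDensity (σ j))
    (hρ : ρ = ∑ j, (p j : ℂ) • (π j ⊗ₖ σ j)) : AliceConcordant ρ := by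
  let e := (Fintype.equivFin J).symm
  refine ⟨Fintype.card J, p ∘ e, π ∘ e, σ ∘ e, ⟨fun j => hp.1 (e j), ?_⟩, fun j => hπ (e j),
    fun i j hij => horth (e i) (e j) (e.injective.ne hij), fun j => hσ (e j), ?_⟩
  · rw [← hp.2]
    exact e.sum_comp p
  · rw [hρ]
    exact (e.sum_comp _).symm

lemma aliceConcordant_of_eq_sum_kronecker {a b J : Type} [Fintype a] [Fintype b] [DecidableEq b]
    [Nonempty b] [Fintype J] {ρ : Mat (a × b)} (hρ : ρ.trace = 1) {π : J → Mat a}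
    (hπ : ∀ j, IsRankOneProj (π j)) (horth : OrthFamily π) {B : J → Mat b}
    (hB : ∀ j, (B j).PosSemidef) (hdec : ρ = ∑ j, π j ⊗ₖ B j) : AliceConcordant ρ := by
  choose p σ hp hptr hσ hBσ using fun j => (hB j).exists_eq_trace_smul_isDensity
  have hdec' : ρ = ∑ j, (p j : ℂ) • (π j ⊗ₖ σ j) := by
    simp only [hdec, hBσ, kronecker_smul]
  refine aliceConcordant_of_eq_sum ⟨hp, ?_⟩ hπ horth hσ hdec'
  have : ∑ j, (p j : ℂ) = 1 := by
    rw [← hρ, hdec, trace_sum]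
    simp only [trace_kronecker, (hπ _).2.2, one_mul, hptr]
  exact_mod_cast this

/-- if every complete orthogonal projector family on H_A leaves ρ invariant
under the unrecorded projective measurement, then ρ is Alice-concordant. -/
theorem stmt_11 {a b : Type} [Fintype a] [Fintype b] [DecidableEq a] [DecidableEq b]
    (ρ : Mat (a × b)) (hρ : IsDensity ρ)
    (hinv : ∀ (J : Type) [Fintype J] (P : J → Mat a),
      (∀ j, (P j).IsHermitian) → (∀ j, P j * P j = P j) → OrthFamily P →
      (∑ j, P j = 1) →
      ∑ j, (P j ⊗ₖ (1 : Mat b)) * ρ * (P j ⊗ₖ (1 : Mat b)) = ρ) :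
    AliceConcordant ρ := by
  have : Nonempty b := by
    by_contra h
    rw [not_nonempty_iff] at h
    simpa [trace] using hρ.2
  have hdephased := hinv a (fun i => single i i 1) (fun i => (isRankOneProj_single i).1)
    (fun i => (isRankOneProj_single i).2.1) orthFamily_single sum_single_one
  simp only [single_kronecker_one_mul_mul_single_kronecker_one] at hdephased
  exact aliceConcordant_of_eq_sum_kronecker hρ.2 isRankOneProj_single orthFamily_single
    (fun i => hρ.1.submatrix _) hdephased.symm
end
end

section
/- For the two-qubit Alice-discordant separable state ρ = ½(|0⟩⟨0| ⊗ ρ₀ + |+⟩⟨+| ⊗ ρ₁) with ρ₀ ≠ ρ₁ density operators on Bob's qubit and |+⟩ = (|0⟩+|1⟩)/√2, there is no complete family {π_j} of orthogonal rank-one projectors on Alice's qubit such that Σ_j (π_j ⊗ I)ρ(π_j ⊗ I) = ρ. -/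
/-!
If a complete rank-one projective measurement `{π_j}` on Alice leaves `ρ` invariant, then each
`π_j ⊗ I` commutes with `ρ`. Two distinct matrices of trace one are linearly independent, so
`π_j` commutes separately with `|0⟩⟨0|` and with `|+⟩⟨+|`. These two projectors generate all of
`M₂(ℂ)`, so `π_j` would be a scalar, which no rank-one projector in dimension two is.
-/

open Matrix
open scoped Kronecker ComplexOrder

noncomputable section

theorem commute_of_sum_mul_mul_eq_self {R ι : Type*} [Ring R] [Fintype ι] {Q : ι → R} {x : R}
    (hidem : ∀ j, IsIdempotentElem (Q j)) (horth : Pairwise fun i j => Q i * Q j = 0)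
    (hfix : ∑ j, Q j * x * Q j = x) (j : ι) : Commute (Q j) x := by
  have hleft : Q j * x = Q j * x * Q j := by
    conv_lhs => rw [← hfix]
    rw [Finset.mul_sum, Finset.sum_eq_single j (fun i _ hij => ?_) (by simp)]
    · rw [← mul_assoc, ← mul_assoc, hidem j]
    · rw [← mul_assoc, ← mul_assoc, horth hij.symm, zero_mul, zero_mul]
  have hright : x * Q j = Q j * x * Q j := by
    conv_lhs => rw [← hfix]
    rw [Finset.sum_mul, Finset.sum_eq_single j (fun i _ hij => ?_) (by simp)]
    · rw [mul_assoc _ (Q j), hidem j]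
    · rw [mul_assoc, horth hij, mul_zero]
  exact hleft.trans hright.symm

theorem eq_and_eq_of_kronecker_add_kronecker_eq {K m n : Type*} [Field K] [Fintype n]
    {A A' B B' : Matrix m m K} {X Y : Matrix n n K} (hX : X.trace = 1) (hY : Y.trace = 1)
    (hXY : X ≠ Y) (h : A ⊗ₖ X + B ⊗ₖ Y = A' ⊗ₖ X + B' ⊗ₖ Y) : A = A' ∧ B = B' := by
  have hentry (i j : m) (k l : n) :
      A i j * X k l + B i j * Y k l = A' i j * X k l + B' i j * Y k l := by
    simpa using congrFun (congrFun h (i, k)) (j, l)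
  have htrace (i j : m) : A i j + B i j = A' i j + B' i j := by
    have := Finset.sum_congr (s₁ := Finset.univ) rfl fun k _ => hentry i j k k
    simp only [trace, diag_apply] at hX hY
    simpa only [Finset.sum_add_distrib, ← Finset.mul_sum, hX, hY, mul_one] using this
  obtain ⟨k, l, hkl⟩ : ∃ k l, X k l ≠ Y k l := by
    by_contra! hall
    exact hXY (Matrix.ext hall)
  have hA : A = A' := by
    ext i j
    have : (A i j - A' i j) * (X k l - Y k l) = 0 := by
      linear_combination hentry i j k l - Y k l * htrace i j
    exact sub_eq_zero.mp ((mul_eq_zero.mp this).resolve_right (sub_ne_zero.mpr hkl))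
  refine ⟨hA, ?_⟩
  ext i j
  simpa [hA] using htrace i j

theorem commute_and_commute_of_commute_kronecker_one {K m n : Type*} [Field K] [Fintype m]
    [DecidableEq m] [Fintype n] [DecidableEq n] {P A B : Matrix m m K} {X Y : Matrix n n K}
    (hX : X.trace = 1) (hY : Y.trace = 1) (hXY : X ≠ Y)
    (h : Commute (P ⊗ₖ (1 : Matrix n n K)) (A ⊗ₖ X + B ⊗ₖ Y)) : Commute P A ∧ Commute P B := by
  have := h.eq
  simp only [mul_add, add_mul, ← mul_kronecker_mul, one_mul, mul_one] at this
  exact eq_and_eq_of_kronecker_add_kronecker_eq hX hY hXY this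

theorem outer_ket0 : outer ![(1 : ℂ), 0] = single 0 0 1 := by
  ext i j
  fin_cases i <;> fin_cases j <;> simp [outer]

theorem outer_const_inv_sqrt_two {n : Type} :
    outer (fun _ : n => ((√2 : ℝ)⁻¹ : ℂ)) = of fun _ _ => 1 / 2 := by
  ext i j
  simp only [outer, of_apply, Complex.star_def, map_inv₀, Complex.conj_ofReal]
  rw [← mul_inv, ← Complex.ofReal_mul, Real.mul_self_sqrt zero_le_two]
  norm_num

theorem eq_smul_one_of_commute_single_of_commute_const {K : Type*} [Field K]
    {P : Matrix (Fin 2) (Fin 2) K} {c : K} (hc : c ≠ 0) (h0 : Commute P (single 0 0 1))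
    (hJ : Commute P (of fun _ _ => c)) : P = P 0 0 • 1 := by
  have e0 (i j) := congrFun (congrFun h0.eq i) j
  have eJ (i j) := congrFun (congrFun hJ.eq i) j
  simp only [mul_apply, Fin.sum_univ_two, single_apply, of_apply] at e0 eJ
  have h01 : P 0 1 = 0 := by simpa using (e0 0 1).symm
  have h10 : P 1 0 = 0 := by simpa using e0 1 0
  have h11 : P 1 1 = P 0 0 := mul_left_cancel₀ hc (by linear_combination (eJ 0 1).symm)
  ext i j
  fin_cases i <;> fin_cases j <;> simp [h01, h10, h11]

theorem IsRankOneProj.ne_smul_one {n : Type} [Fintype n] [DecidableEq n]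
    (hn : 2 ≤ Fintype.card n) {P : Mat n} (hP : IsRankOneProj P) (c : ℂ) : P ≠ c • 1 := by
  rintro rfl
  obtain ⟨-, hidem, htr⟩ := hP
  have htr_sq := congrArg trace hidem
  simp only [Matrix.smul_mul, Matrix.one_mul, trace_smul, trace_one, smul_eq_mul]
    at htr_sq htr
  have hc : c = 1 := by linear_combination htr_sq - (c - 1) * htr
  subst hc
  rw [one_mul, Nat.cast_eq_one] at htr
  omega

/-- the discordant separable state ρ = ½(|0⟩⟨0|⊗ρ₀ + |+⟩⟨+|⊗ρ₁) with
ρ₀ ≠ ρ₁ is not left invariant by any complete rank-one projective measurement on Alice. -/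
theorem stmt_19 (ρ₀ ρ₁ : Mat (Fin 2))
    (h₀ : IsDensity ρ₀) (h₁ : IsDensity ρ₁) (hne : ρ₀ ≠ ρ₁) :
    let ket0 : Fin 2 → ℂ := ![1, 0]
    let ketP : Fin 2 → ℂ := fun _ => ((Real.sqrt 2 : ℝ)⁻¹ : ℂ)
    let ρ : Mat (Fin 2 × Fin 2) := (1/2 : ℂ) • (outer ket0 ⊗ₖ ρ₀ + outer ketP ⊗ₖ ρ₁)
    ¬ ∃ (m : ℕ) (π : Fin m → Mat (Fin 2)),
        (∀ j, IsRankOneProj (π j)) ∧ OrthFamily π ∧ (∑ j, π j = 1) ∧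
        ∑ j, (π j ⊗ₖ (1 : Mat (Fin 2))) * ρ * (π j ⊗ₖ (1 : Mat (Fin 2))) = ρ := by
  intro ket0 ketP ρ
  rintro ⟨m, π, hproj, horth, hsum, hinv⟩
  obtain ⟨j⟩ : Nonempty (Fin m) := by
    rw [← not_isEmpty_iff]
    intro
    simp at hsum
  have hcomm : Commute (π j ⊗ₖ (1 : Mat (Fin 2))) ρ := by
    refine commute_of_sum_mul_mul_eq_self (fun i => ?_) (fun i k hik => ?_) hinv j
    · rw [IsIdempotentElem, ← mul_kronecker_mul, (hproj i).2.1, one_mul]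
    · dsimp only
      rw [← mul_kronecker_mul, horth i k hik, zero_kronecker]
  obtain ⟨hket0, hketP⟩ := commute_and_commute_of_commute_kronecker_one h₀.2 h₁.2 hne
    ((Commute.smul_right_iff₀ (by norm_num)).mp hcomm)
  refine (hproj j).ne_smul_one (by simp) (π j 0 0) ?_
  exact eq_smul_one_of_commute_single_of_commute_const (c := 1/2) (by norm_num)
    (outer_ket0 ▸ hket0) (outer_const_inv_sqrt_two ▸ hketP)
end
end
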